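/- Let X be an infinite-dimensional complex Banach space. Then G_a(X) = 1 if and only if for every p ∈ [2, ∞) there exists a sequence (x_n)_{n≥1} in X with Σ_n |x'(x_n)| < ∞ for every continuous linear functional x' ∈ X' but Σ_n ‖x_n‖^p = ∞ (i.e. the identity of X is not (p,1)-summing for any 2 ≤ p < ∞). Here G_a(X) is the gap for absolute convergence of Dirichlet series in X. -/

import Mathlib

open Filter Finset Topology

/-- The abscissa of convergence `σ_c(D)` of the Dirichlet series `D = ∑ₙ aₙ n^{-s}`,
as an extended real number. -/
noncomputable def dirichletSigmaC {X : Type*} [NormedAddCommGroup X] [NormedSpace ℂ X]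
    (a : ℕ → X) : EReal :=
  sInf { x : EReal | ∃ r : ℝ, x = (r : EReal) ∧ ∀ s : ℂ, r < s.re →
    ∃ L : X, Tendsto
      (fun N : ℕ => ∑ n ∈ Finset.range N, (((n + 1 : ℕ) : ℂ) ^ (-s)) • a (n + 1))
      atTop (𝓝 L) }

/-- The abscissa of absolute convergence `σ_a(D)` of `D = ∑ₙ aₙ n^{-s}`. -/
noncomputable def dirichletSigmaA {X : Type*} [SeminormedAddCommGroup X]
    (a : ℕ → X) : EReal :=
  sInf { x : EReal | ∃ r : ℝ, x = (r : EReal) ∧ ∀ σ : ℝ, r < σ →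
    Summable (fun n : ℕ => ‖a (n + 1)‖ * ((n + 1 : ℕ) : ℝ) ^ (-σ)) }

/-- The abscissa of weak absolute convergence `σ_a^w(D) = sup_{x'} σ_a(x'(D))`. -/
noncomputable def dirichletSigmaAw {X : Type*} [NormedAddCommGroup X] [NormedSpace ℂ X]
    (a : ℕ → X) : EReal :=
  ⨆ x' : X →L[ℂ] ℂ, dirichletSigmaA (fun n => x' (a n))

/-- The gap for absolute convergence of Dirichlet series in `X`:
`G_a(X) = sup_D (σ_a(D) - σ_a^w(D))`, the supremum over all Dirichlet series with
coefficients in `X` and finite abscissa of convergence. -/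
noncomputable def dirichletGapA (X : Type*) [NormedAddCommGroup X] [NormedSpace ℂ X] :
    EReal :=
  sSup { g : EReal | ∃ a : ℕ → X, dirichletSigmaC a < ⊤ ∧
    g = dirichletSigmaA a - dirichletSigmaAw a }

/-!
`G_a(X) ≤ 1` always: if `σ_a^w(D) < w`, the translated coefficients `n^{-w} aₙ` are weakly
summable, hence bounded by Banach–Steinhaus, so `σ_a(D) ≤ w + 1`. If every weakly summable
sequence is `p`-summable, Hölder's inequality improves this to `σ_a(D) ≤ w + 1 - 1/p`, so
`G_a(X) < 1`. Conversely, a weakly summable `(xₙ)` with `∑ ‖xₙ‖^p = ∞` yields, for every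
`0 ≤ σ < 1 - 1/p`, a Dirichlet series with `σ_a^w ≤ 0` and `σ ≤ σ_a`: a subsequence bounded away
from `0` if `xₙ ↛ 0`, and otherwise the decreasing rearrangement `(aₖ)` of `(xₙ)`, for which
`∑ ‖aₖ‖ k^{-σ} = T < ∞` would give `k^{1-σ} ‖aₖ‖ ≤ T` and hence `∑ ‖aₖ‖^p < ∞`.
-/

theorem summable_natSucc_rpow_neg_iff {c : ℝ} :
    Summable (fun n : ℕ => ((n + 1 : ℕ) : ℝ) ^ (-c)) ↔ 1 < c :=
  (summable_nat_add_iff 1 (f := fun n : ℕ => (n : ℝ) ^ (-c))).trans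
    (Real.summable_nat_rpow.trans neg_lt_neg_iff)

theorem summable_mul_natSucc_rpow_neg_of_le {y : ℕ → ℝ} {C τ : ℝ} (hy : ∀ n, 0 ≤ y n)
    (hC : ∀ n, y n ≤ C) (hτ : 1 < τ) :
    Summable fun n : ℕ => y n * ((n + 1 : ℕ) : ℝ) ^ (-τ) :=
  ((summable_natSucc_rpow_neg_iff.2 hτ).mul_left C).of_nonneg_of_le
    (fun n => mul_nonneg (hy n) (by positivity))
    fun n => mul_le_mul_of_nonneg_right (hC n) (by positivity)

theorem summable_mul_natSucc_rpow_neg_of_summable_rpow {y : ℕ → ℝ} {p τ : ℝ}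
    (hy : ∀ n, 0 ≤ y n) (hp : 1 < p) (hτ : 1 - 1 / p < τ) (hyp : Summable fun n => y n ^ p) :
    Summable fun n : ℕ => y n * ((n + 1 : ℕ) : ℝ) ^ (-τ) := by
  refine Real.summable_mul_of_Lp_Lq_of_nonneg (.conjExponent hp) hy (fun n => by positivity) hyp ?_
  have hq : 1 < τ * p.conjExponent := by
    have hp0 : 0 < p := by linarith
    have hτp : (1 - 1 / p) * p = p - 1 := by field_simp
    rw [Real.conjExponent, mul_div_assoc', lt_div_iff₀ (by linarith)]
    nlinarith
  refine (summable_natSucc_rpow_neg_iff.2 hq).congr fun n => ?_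
  rw [← Real.rpow_mul (by positivity), neg_mul]

theorem summable_subtype_pos_iff {b f : ℕ → ℝ} (hb0 : ∀ j, 0 ≤ b j)
    (hf : ∀ j, b j = 0 → f j = 0) : Summable (fun k : {k | 0 < b k} => f k) ↔ Summable f :=
  Subtype.val_injective.summable_iff fun j hj =>
    hf j (le_antisymm (not_lt.1 fun h => hj ⟨⟨j, h⟩, rfl⟩) (hb0 j))

section DecreasingRank

open OrderDual

variable (b : ℕ → ℝ)

/-- Listing the indices by decreasing `b`, ties broken by increasing index. -/
def decreasingKey (k : ℕ) : ℝᵒᵈ ×ₗ ℕ := toLex (toDual (b k), k)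

noncomputable def decreasingRank (k : ℕ) : ℕ :=
  Set.ncard {j | decreasingKey b j ≤ decreasingKey b k}

variable {b}

theorem decreasingKey_injective : Function.Injective (decreasingKey b) :=
  fun _ _ h => congrArg (fun x => (ofLex x).2) h

theorem le_of_decreasingKey_le {j k : ℕ} (h : decreasingKey b j ≤ decreasingKey b k) :
    b k ≤ b j := by
  rcases Prod.Lex.le_iff.1 h with h | ⟨h, -⟩
  · exact (toDual_lt_toDual.1 h).le
  · exact (toDual_inj.1 h).ge

variable (hb : Tendsto b cofinite (𝓝 0))
include hb

theorem finite_setOf_decreasingKey_le {k : ℕ} (hk : 0 < b k) :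
    {j | decreasingKey b j ≤ decreasingKey b k}.Finite :=
  (eventually_cofinite.1 (hb.eventually (gt_mem_nhds hk))).subset
    fun _ hj => not_lt.2 (le_of_decreasingKey_le hj)

theorem one_le_decreasingRank {k : ℕ} (hk : 0 < b k) : 1 ≤ decreasingRank b k :=
  (Set.ncard_pos (finite_setOf_decreasingKey_le hb hk)).2 ⟨k, le_refl (decreasingKey b k)⟩

theorem decreasingRank_le {j k : ℕ} (hk : 0 < b k) (h : decreasingKey b j ≤ decreasingKey b k) :
    decreasingRank b j ≤ decreasingRank b k :=
  Set.ncard_le_ncard (fun _ hi => le_trans hi h) (finite_setOf_decreasingKey_le hb hk)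

theorem decreasingRank_lt {j k : ℕ} (hk : 0 < b k) (h : decreasingKey b j < decreasingKey b k) :
    decreasingRank b j < decreasingRank b k :=
  Set.ncard_lt_ncard
    ⟨fun _ hi => le_trans hi h.le, fun hsub => h.not_ge (hsub (le_refl (decreasingKey b k)))⟩
    (finite_setOf_decreasingKey_le hb hk)

theorem decreasingRank_injOn : Set.InjOn (decreasingRank b) {k | 0 < b k} := by
  intro j hj k hk hjk
  by_contra hne
  rcases lt_or_gt_of_ne (decreasingKey_injective.ne hne) with h | h
  · exact (decreasingRank_lt hb hk h).ne hjk
  · exact (decreasingRank_lt hb hj h).ne hjk.symm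

variable {σ : ℝ} (hb0 : ∀ j, 0 ≤ b j) (hσ : 0 ≤ σ)
  (hsum : Summable fun j => b j * (decreasingRank b j : ℝ) ^ (-σ))
include hb0 hσ hsum

/-- The `decreasingRank b k` indices ranked up to `k` all carry `b j ≥ b k`. -/
theorem mul_decreasingRank_rpow_le_tsum {k : ℕ} (hk : 0 < b k) :
    b k * (decreasingRank b k : ℝ) ^ (1 - σ) ≤
      ∑' j, b j * (decreasingRank b j : ℝ) ^ (-σ) := by
  have hA := finite_setOf_decreasingKey_le hb hk
  have hrank_pos {j : ℕ} (hj : decreasingKey b j ≤ decreasingKey b k) :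
      (0 : ℝ) < decreasingRank b j := by
    exact_mod_cast one_le_decreasingRank hb (hk.trans_le (le_of_decreasingKey_le hj))
  calc b k * (decreasingRank b k : ℝ) ^ (1 - σ)
      = ∑ _j ∈ hA.toFinset, b k * (decreasingRank b k : ℝ) ^ (-σ) := by
        rw [Finset.sum_const, nsmul_eq_mul, ← Set.ncard_eq_toFinset_card _ hA]
        change _ = (decreasingRank b k : ℝ) * _
        rw [sub_eq_add_neg, Real.rpow_add (hrank_pos le_rfl), Real.rpow_one]
        ring
    _ ≤ ∑ j ∈ hA.toFinset, b j * (decreasingRank b j : ℝ) ^ (-σ) := by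
        refine Finset.sum_le_sum fun j hj => ?_
        rw [Set.Finite.mem_toFinset] at hj
        exact mul_le_mul (le_of_decreasingKey_le hj)
          (Real.rpow_le_rpow_of_nonpos (hrank_pos hj)
            (by exact_mod_cast decreasingRank_le hb hk hj) (neg_nonpos.2 hσ))
          (Real.rpow_nonneg (Nat.cast_nonneg _) _) (hb0 j)
    _ ≤ ∑' j, b j * (decreasingRank b j : ℝ) ^ (-σ) :=
        hsum.sum_le_tsum _ fun j _ => mul_nonneg (hb0 j) (by positivity)

theorem summable_rpow_of_summable_mul_decreasingRank_rpow {p : ℝ} (hp : 0 < p)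
    (hσp : 1 < (1 - σ) * p) : Summable fun j => b j ^ p := by
  set T := ∑' j, b j * (decreasingRank b j : ℝ) ^ (-σ)
  have hbound {k : ℕ} (hk : 0 < b k) :
      b k ^ p ≤ T ^ p * (decreasingRank b k : ℝ) ^ ((σ - 1) * p) := by
    have hr : (0 : ℝ) < decreasingRank b k := by exact_mod_cast one_le_decreasingRank hb hk
    have hbk : b k ≤ T * (decreasingRank b k : ℝ) ^ (σ - 1) :=
      calc b k
          = b k * (decreasingRank b k : ℝ) ^ (1 - σ) * (decreasingRank b k : ℝ) ^ (σ - 1) := by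
            rw [mul_assoc, ← Real.rpow_add hr]; simp
        _ ≤ T * (decreasingRank b k : ℝ) ^ (σ - 1) := by
            gcongr; exact mul_decreasingRank_rpow_le_tsum hb hb0 hσ hsum hk
    calc b k ^ p ≤ (T * (decreasingRank b k : ℝ) ^ (σ - 1)) ^ p := by gcongr
      _ = T ^ p * (decreasingRank b k : ℝ) ^ ((σ - 1) * p) := by
        rw [Real.mul_rpow (tsum_nonneg fun j => mul_nonneg (hb0 j) (by positivity))
          (by positivity), Real.rpow_mul hr.le]
  have hS : Summable fun k : {k | 0 < b k} => b k ^ p :=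
    (((Real.summable_nat_rpow.2 (by nlinarith)).comp_injective
      (decreasingRank_injOn hb).injective).mul_left (T ^ p)).of_nonneg_of_le
      (fun k => Real.rpow_nonneg (hb0 k) _) fun k => hbound k.2
  exact (summable_subtype_pos_iff hb0 fun j hj => by simp [hj, hp.ne']).1 hS

end DecreasingRank

theorem exists_strictMono_not_summable_of_not_tendsto {E : Type*} [SeminormedAddCommGroup E]
    {x : ℕ → E} {σ : ℝ} (hσ : σ ≤ 1) (hx : ¬ Tendsto (fun n => ‖x n‖) atTop (𝓝 0)) :
    ∃ φ : ℕ → ℕ, StrictMono φ ∧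
      ¬ Summable fun n : ℕ => ‖x (φ (n + 1))‖ * ((n + 1 : ℕ) : ℝ) ^ (-σ) := by
  obtain ⟨ε, hε, hfreq⟩ : ∃ ε > 0, ∃ᶠ n in atTop, ε ≤ ‖x n‖ := by
    simpa [Metric.tendsto_nhds, not_eventually, frequently_atTop] using hx
  obtain ⟨φ, hφ, hφε⟩ := extraction_of_frequently_atTop hfreq
  refine ⟨φ, hφ, fun hsum => ?_⟩
  have hε_sum : Summable fun n : ℕ => ε * ((n + 1 : ℕ) : ℝ) ^ (-σ) :=
    hsum.of_nonneg_of_le (fun n => by positivity)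
      fun n => mul_le_mul_of_nonneg_right (hφε _) (by positivity)
  exact hσ.not_gt (summable_natSucc_rpow_neg_iff.1 ((summable_mul_left_iff hε.ne').1 hε_sum))

namespace EReal

theorem sub_le_of_forall_lt_le_add {A B : EReal} {c : ℝ}
    (h : ∀ w : ℝ, B < w → A ≤ ((w + c : ℝ) : EReal)) : A - B ≤ c := by
  refine sub_le_of_le_add' (le_of_forall_lt_iff_le.1 fun z hz => ?_)
  have hB : B < ((z - c : ℝ) : EReal) := by
    rwa [coe_sub, EReal.lt_sub_iff_add_lt (.inl (coe_ne_bot c)) (.inl (coe_ne_top c))]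
  simpa using h (z - c) hB

end EReal

section WeaklyBounded

variable {𝕜 E : Type*} [RCLike 𝕜] [NormedAddCommGroup E] [NormedSpace 𝕜 E]

theorem exists_norm_le_of_forall_norm_apply_le {ι : Type*} {y : ι → E}
    (h : ∀ x' : StrongDual 𝕜 E, ∃ C, ∀ i, ‖x' (y i)‖ ≤ C) : ∃ C, ∀ i, ‖y i‖ ≤ C := by
  obtain ⟨C, hC⟩ := banach_steinhaus (g := fun i => NormedSpace.inclusionInDoubleDualLi 𝕜 (y i)) h
  exact ⟨C, fun i => ((NormedSpace.inclusionInDoubleDualLi 𝕜).norm_map (y i)).symm.trans_le (hC i)⟩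

theorem exists_norm_le_of_summable_norm_apply {y : ℕ → E}
    (h : ∀ x' : StrongDual 𝕜 E, Summable fun n => ‖x' (y n)‖) : ∃ C, ∀ n, ‖y n‖ ≤ C :=
  exists_norm_le_of_forall_norm_apply_le fun x' =>
    ⟨_, fun n => (h x').le_tsum n fun _ _ => norm_nonneg _⟩

end WeaklyBounded

section DirichletSeries

theorem dirichletSigmaA_le {E : Type*} [SeminormedAddCommGroup E] {a : ℕ → E} {r : ℝ}
    (h : ∀ σ : ℝ, r < σ → Summable fun n : ℕ => ‖a (n + 1)‖ * ((n + 1 : ℕ) : ℝ) ^ (-σ)) :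
    dirichletSigmaA a ≤ r :=
  sInf_le ⟨r, rfl, h⟩

theorem le_dirichletSigmaA {E : Type*} [SeminormedAddCommGroup E] {a : ℕ → E} {σ : ℝ}
    (h : ¬ Summable fun n : ℕ => ‖a (n + 1)‖ * ((n + 1 : ℕ) : ℝ) ^ (-σ)) :
    (σ : EReal) ≤ dirichletSigmaA a := by
  refine le_sInf ?_
  rintro _ ⟨r, rfl, hr⟩
  exact EReal.coe_le_coe_iff.2 (not_lt.1 fun hrσ => h (hr σ hrσ))

theorem summable_of_dirichletSigmaA_lt {E : Type*} [SeminormedAddCommGroup E] {a : ℕ → E}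
    {σ : ℝ} (h : dirichletSigmaA a < σ) :
    Summable fun n : ℕ => ‖a (n + 1)‖ * ((n + 1 : ℕ) : ℝ) ^ (-σ) := by
  obtain ⟨_, ⟨r, rfl, hr⟩, hrσ⟩ := sInf_lt_iff.1 h
  exact hr σ (EReal.coe_lt_coe_iff.1 hrσ)

variable {X : Type*} [NormedAddCommGroup X] [NormedSpace ℂ X]

theorem summable_of_dirichletSigmaAw_lt {a : ℕ → X} {σ : ℝ} (h : dirichletSigmaAw a < σ)
    (x' : X →L[ℂ] ℂ) :
    Summable fun n : ℕ => ‖x' (a (n + 1))‖ * ((n + 1 : ℕ) : ℝ) ^ (-σ) :=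
  summable_of_dirichletSigmaA_lt (a := fun n => x' (a n))
    ((le_iSup (fun x' : X →L[ℂ] ℂ => dirichletSigmaA fun n => x' (a n)) x').trans_lt h)

theorem dirichletSigmaAw_le_zero {a : ℕ → X}
    (h : ∀ x' : X →L[ℂ] ℂ, Summable fun n => ‖x' (a n)‖) : dirichletSigmaAw a ≤ (0 : ℝ) := by
  refine iSup_le fun x' => dirichletSigmaA_le fun σ hσ => ?_
  refine ((summable_nat_add_iff 1).2 (h x')).of_nonneg_of_le (fun n => by positivity) fun n => ?_
  refine mul_le_of_le_one_right (norm_nonneg _) (Real.rpow_le_one_of_one_le_of_nonpos ?_ ?_)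
  · exact_mod_cast Nat.le_add_left 1 n
  · linarith

theorem dirichletSigmaA_le_one_of_summable_norm_apply {a : ℕ → X}
    (h : ∀ x' : X →L[ℂ] ℂ, Summable fun n => ‖x' (a n)‖) : dirichletSigmaA a ≤ (1 : ℝ) := by
  obtain ⟨C, hC⟩ := exists_norm_le_of_summable_norm_apply h
  exact dirichletSigmaA_le fun σ hσ =>
    summable_mul_natSucc_rpow_neg_of_le (fun n => norm_nonneg _) (fun n => hC _) hσ

theorem dirichletSigmaC_le_dirichletSigmaA [CompleteSpace X] (a : ℕ → X) :
    dirichletSigmaC a ≤ dirichletSigmaA a := by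
  refine le_sInf ?_
  rintro _ ⟨r, rfl, hr⟩
  refine sInf_le ⟨r, rfl, fun s hs => ?_⟩
  have hsum : Summable fun n : ℕ => ((n + 1 : ℕ) : ℂ) ^ (-s) • a (n + 1) := by
    refine Summable.of_norm ((hr s.re hs).congr fun n => ?_)
    rw [norm_smul, Complex.norm_natCast_cpow_of_pos n.succ_pos, Complex.neg_re, mul_comm]
  exact ⟨_, hsum.hasSum.tendsto_sum_nat⟩

theorem dirichletGapA_le {c : ℝ}
    (h : ∀ y : ℕ → X, (∀ x' : X →L[ℂ] ℂ, Summable fun n => ‖x' (y n)‖) →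
      ∀ τ, c < τ → Summable fun n : ℕ => ‖y n‖ * ((n + 1 : ℕ) : ℝ) ^ (-τ)) :
    dirichletGapA X ≤ c := by
  refine sSup_le ?_
  rintro _ ⟨a, -, rfl⟩
  refine EReal.sub_le_of_forall_lt_le_add fun w hw => dirichletSigmaA_le fun σ hσ => ?_
  have hpos (n : ℕ) : (0 : ℝ) < ((n + 1 : ℕ) : ℝ) := by positivity
  let y (n : ℕ) : X := ((n + 1 : ℕ) : ℝ) ^ (-w) • a (n + 1)
  have hy (x' : X →L[ℂ] ℂ) : Summable fun n => ‖x' (y n)‖ :=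
    (summable_of_dirichletSigmaAw_lt hw x').congr fun n => by
      rw [x'.map_smul_of_tower, norm_smul_of_nonneg (Real.rpow_nonneg (hpos n).le _), mul_comm]
  refine (h y hy (σ - w) (by linarith)).congr fun n => ?_
  rw [norm_smul_of_nonneg (Real.rpow_nonneg (hpos n).le _), mul_right_comm, mul_comm,
    ← Real.rpow_add (hpos n)]
  ring_nf

theorem dirichletGapA_le_one : dirichletGapA X ≤ (1 : ℝ) :=
  dirichletGapA_le fun _ hy _ hτ =>
    let ⟨_, hC⟩ := exists_norm_le_of_summable_norm_apply hy
    summable_mul_natSucc_rpow_neg_of_le (fun _ => norm_nonneg _) hC hτ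

theorem dirichletGapA_le_of_summable_rpow {p : ℝ} (hp : 1 < p)
    (h : ∀ x : ℕ → X, (∀ x' : X →L[ℂ] ℂ, Summable fun n => ‖x' (x n)‖) →
      Summable fun n => ‖x n‖ ^ p) :
    dirichletGapA X ≤ (1 - 1 / p : ℝ) :=
  dirichletGapA_le fun y hy _ hτ =>
    summable_mul_natSucc_rpow_neg_of_summable_rpow (fun _ => norm_nonneg _) hp hτ (h y hy)

theorem le_dirichletGapA [CompleteSpace X] {a : ℕ → X} {σ : ℝ}
    (hw : ∀ x' : X →L[ℂ] ℂ, Summable fun n => ‖x' (a n)‖)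
    (hσ : ¬ Summable fun n : ℕ => ‖a (n + 1)‖ * ((n + 1 : ℕ) : ℝ) ^ (-σ)) :
    (σ : EReal) ≤ dirichletGapA X := by
  have hc : dirichletSigmaC a < ⊤ := (dirichletSigmaC_le_dirichletSigmaA a).trans_lt
    ((dirichletSigmaA_le_one_of_summable_norm_apply hw).trans_lt (EReal.coe_lt_top 1))
  refine le_trans ?_ (le_sSup ⟨a, hc, rfl⟩)
  calc (σ : EReal) = σ - ((0 : ℝ) : EReal) := by simp
    _ ≤ dirichletSigmaA a - dirichletSigmaAw a :=
      EReal.sub_le_sub (le_dirichletSigmaA hσ) (dirichletSigmaAw_le_zero hw)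

theorem exists_weakly_summable_not_summable_mul_rpow {x : ℕ → X} {p σ : ℝ} (hp : 0 < p)
    (hσ : 0 ≤ σ) (hσp : 1 < (1 - σ) * p) (hw : ∀ x' : X →L[ℂ] ℂ, Summable fun n => ‖x' (x n)‖)
    (hxp : ¬ Summable fun n => ‖x n‖ ^ p) :
    ∃ a : ℕ → X, (∀ x' : X →L[ℂ] ℂ, Summable fun n => ‖x' (a n)‖) ∧
      ¬ Summable fun n : ℕ => ‖a (n + 1)‖ * ((n + 1 : ℕ) : ℝ) ^ (-σ) := by
  by_cases hx0 : Tendsto (fun n => ‖x n‖) atTop (𝓝 0)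
  swap
  · obtain ⟨φ, hφ, hφσ⟩ :=
      exists_strictMono_not_summable_of_not_tendsto (σ := σ) (by nlinarith) hx0
    exact ⟨x ∘ φ, fun x' => (hw x').comp_injective hφ.injective, hφσ⟩
  rw [← Nat.cofinite_eq_atTop] at hx0
  -- put the nonzero `x k` at the positions of the decreasing rearrangement of their norms
  set b : ℕ → ℝ := fun n => ‖x n‖
  let ρ : {k | 0 < b k} → ℕ := fun k => decreasingRank b k
  have hρ : Function.Injective ρ := (decreasingRank_injOn hx0).injective
  let a : ℕ → X := Function.extend ρ (fun k => x k) 0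
  have ha_ρ (k) : a (ρ k) = x k := hρ.extend_apply _ _ k
  have ha_zero (m) (hm : m ∉ Set.range ρ) : a m = 0 := Function.extend_apply' _ _ m hm
  refine ⟨a, fun x' => ?_, fun hsum => hxp ?_⟩
  · refine (hρ.summable_iff fun m hm => by simp [ha_zero m hm]).1 ?_
    simpa [Function.comp_def, ha_ρ] using (hw x').subtype _
  · have hsum' : Summable fun m : ℕ => ‖a m‖ * (m : ℝ) ^ (-σ) := (summable_nat_add_iff 1).1 hsum
    have hsumρ : Summable fun k : {k | 0 < b k} => b k * (decreasingRank b k : ℝ) ^ (-σ) := by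
      simpa [Function.comp_def, ha_ρ] using hsum'.comp_injective hρ
    exact summable_rpow_of_summable_mul_decreasingRank_rpow hx0 (fun _ => norm_nonneg _) hσ
      ((summable_subtype_pos_iff (fun _ => norm_nonneg _) fun _ hj =>
        mul_eq_zero_of_left hj _).1 hsumρ) hp hσp

end DirichletSeries

theorem gapA_eq_one_iff_not_p_one_summing_general
    (X : Type*) [NormedAddCommGroup X] [NormedSpace ℂ X] [CompleteSpace X] :
    dirichletGapA X = ((1 : ℝ) : EReal) ↔
      ∀ p : ℝ, 2 ≤ p → ∃ x : ℕ → X,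
        (∀ x' : X →L[ℂ] ℂ, Summable (fun n => ‖x' (x n)‖)) ∧
        ¬ Summable (fun n => ‖x n‖ ^ p) := by
  refine ⟨fun hG p hp => ?_, fun h => dirichletGapA_le_one.antisymm ?_⟩
  · by_contra! hsumming
    have h1 := hG.symm.trans_le (dirichletGapA_le_of_summable_rpow (by linarith) hsumming)
    have : 0 < 1 / p := by positivity
    linarith [EReal.coe_le_coe_iff.1 h1]
  · refine EReal.ge_of_forall_gt_iff_ge.1 fun z hz => ?_
    set σ := max z 0
    have hσ1 : σ < 1 := max_lt (EReal.coe_lt_coe_iff.1 hz) one_pos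
    have hp : 2 ≤ 2 / (1 - σ) := by
      rw [le_div_iff₀ (by linarith)]; linarith [le_max_right z 0]
    have hσp : 1 < (1 - σ) * (2 / (1 - σ)) := by
      rw [mul_div_cancel₀ _ (by linarith)]; norm_num
    obtain ⟨x, hw, hx⟩ := h _ hp
    obtain ⟨a, ha, hna⟩ := exists_weakly_summable_not_summable_mul_rpow
      (by linarith) (le_max_right z 0) hσp hw hx
    exact (EReal.coe_le_coe_iff.2 (le_max_left z 0)).trans (le_dirichletGapA ha hna)

/-- For an infinite-dimensional complex Banach space `X`, `G_a(X) = 1` if and only if the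
identity of `X` is not `(p,1)`-summing for any `2 ≤ p < ∞`. -/
theorem gapA_eq_one_iff_not_p_one_summing
    (X : Type*) [NormedAddCommGroup X] [NormedSpace ℂ X] [CompleteSpace X]
    (hX : ¬ FiniteDimensional ℂ X) :
    dirichletGapA X = ((1 : ℝ) : EReal) ↔
      ∀ p : ℝ, 2 ≤ p → ∃ x : ℕ → X,
        (∀ x' : X →L[ℂ] ℂ, Summable (fun n => ‖x' (x n)‖)) ∧
        ¬ Summable (fun n => ‖x n‖ ^ p) :=
  gapA_eq_one_iff_not_p_one_summing_general X
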